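/- arXiv:1612.05408 — 3 statements merged into one kernel-verified Lean document; each statement's English description precedes it below -/
import Mathlib

section
/- Let $0<\alpha<1$, $f:[0,T]\to\mathbb{R}$ upper semicontinuous, $g\in C^1((0,T])\cap C([0,T])$, and suppose $f-g$ attains its supremum over $(0,T]$ at a point $\hat t\in(0,T]$. Then the negative part of $\tau\mapsto (f(\hat t)-f(\hat t-\tau))\tau^{-\alpha-1}$ is Lebesgue integrable on $(0,\hat t)$. -/
/-!
Since `t̂` maximises `f - g`, the decrement `f t̂ - f (t̂ - τ)` is bounded below by
`g t̂ - g (t̂ - τ)`, and that is `≥ -K τ` on the whole of `(0, t̂)`: near `τ = 0` because `g` is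
`C¹` (hence Lipschitz) near `t̂`, and away from `0` because `g` is bounded. The negative part of
the integrand is therefore at most `K τ ^ (-α)`, which is integrable on `(0, t̂)` as `α < 1`.
-/

open MeasureTheory Set Real

theorem UpperSemicontinuousOn.aemeasurable {δ β : Type*} [TopologicalSpace δ] [MeasurableSpace δ]
    [OpensMeasurableSpace δ] [LinearOrder β] [TopologicalSpace β] [OrderTopology β]
    [SecondCountableTopology β] [MeasurableSpace β] [BorelSpace β] {f : δ → β} {s : Set δ}
    (hf : UpperSemicontinuousOn f s) (hs : MeasurableSet s) {μ : Measure δ} :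
    AEMeasurable f (μ.restrict s) :=
  (aemeasurable_restrict_iff_comap_subtype hs).2
    (upperSemicontinuousOn_iff_restrict.2 hf).measurable.aemeasurable

theorem exists_norm_sub_le_mul_of_contDiffOn_Ioc {E : Type*} [NormedAddCommGroup E]
    [NormedSpace ℝ E] {g : ℝ → E} {a b : ℝ} (hab : a < b) (hgc : ContinuousOn g (Icc a b))
    (hg : ContDiffOn ℝ 1 g (Ioc a b)) :
    ∃ K, 0 ≤ K ∧ ∀ x ∈ Icc a b, ‖g x - g b‖ ≤ K * (b - x) := by
  obtain ⟨c, hac, hcb⟩ := exists_between hab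
  obtain ⟨L, hL⟩ := (hg.mono (Icc_subset_Ioc hac le_rfl)).exists_lipschitzOnWith
    one_ne_zero (convex_Icc c b) isCompact_Icc
  obtain ⟨B, hB⟩ := isCompact_Icc.exists_bound_of_continuousOn hgc
  refine ⟨max L (2 * B / (b - c)), le_max_of_le_left L.coe_nonneg, fun x ⟨hax, hxb⟩ => ?_⟩
  rcases le_or_gt c x with hcx | hxc
  · calc ‖g x - g b‖ = dist (g x) (g b) := (dist_eq_norm _ _).symm
      _ ≤ L * dist x b := hL.dist_le_mul x ⟨hcx, hxb⟩ b ⟨hcb.le, le_rfl⟩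
      _ = L * (b - x) := by rw [dist_comm, Real.dist_eq, abs_of_nonneg (by linarith)]
      _ ≤ _ := mul_le_mul_of_nonneg_right (le_max_left _ _) (by linarith)
  · calc ‖g x - g b‖ ≤ ‖g x‖ + ‖g b‖ := norm_sub_le _ _
      _ ≤ 2 * B := by linarith [hB x ⟨hax, hxb⟩, hB b ⟨hab.le, le_rfl⟩]
      _ = 2 * B / (b - c) * (b - c) := (div_mul_cancel₀ _ (sub_pos.2 hcb).ne').symm
      _ ≤ _ := mul_le_mul (le_max_right _ _) (by linarith) (by linarith)
        (le_max_of_le_left L.coe_nonneg)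

theorem integrableOn_negPart_div_rpow {φ : ℝ → ℝ} {α t K : ℝ} (ht : 0 < t) (hα : α < 1)
    (hK : 0 ≤ K) (hφ : AEMeasurable φ (volume.restrict (Ioo 0 t)))
    (hφK : ∀ τ ∈ Ioo 0 t, -φ τ ≤ K * τ) :
    IntegrableOn (fun τ => max (-(φ τ / τ ^ (α + 1))) 0) (Ioo 0 t) := by
  have hdom : IntegrableOn (fun τ : ℝ => K * τ ^ (-α)) (Ioo 0 t) :=
    ((intervalIntegral.integrableOn_Ioo_rpow_iff ht).2 (by linarith)).const_mul K
  refine hdom.mono' (((hφ.div (measurable_id.pow_const _).aemeasurable).neg.max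
    aemeasurable_const).aestronglyMeasurable) ((ae_restrict_iff' measurableSet_Ioo).2 <|
      .of_forall fun τ ⟨hτ, hτt⟩ => ?_)
  have hpow : K * τ ^ (-α) = K * τ / τ ^ (α + 1) := by
    rw [rpow_add_one hτ.ne', rpow_neg hτ.le]
    field_simp
  rw [norm_of_nonneg (le_max_right _ _), hpow, ← neg_div]
  exact max_le (by gcongr; exact hφK τ ⟨hτ, hτt⟩) (by positivity)

theorem stmt_3_general (α T : ℝ) (hα1 : α < 1)
    (f g : ℝ → ℝ) (hf : UpperSemicontinuousOn f (Icc 0 T))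
    (hgc : ContinuousOn g (Icc 0 T)) (hg : ContDiffOn ℝ 1 g (Ioc 0 T))
    (t0 : ℝ) (ht0 : t0 ∈ Ioc 0 T)
    (hmax : ∀ s ∈ Ioc (0:ℝ) T, f s - g s ≤ f t0 - g t0) :
    IntegrableOn (fun τ => max (-((f t0 - f (t0 - τ)) / τ ^ (α + 1))) 0) (Ioo 0 t0) volume := by
  obtain ⟨ht0, ht0T⟩ := ht0
  obtain ⟨K, hK, hgK⟩ := exists_norm_sub_le_mul_of_contDiffOn_Ioc ht0
    (hgc.mono (Icc_subset_Icc_right ht0T)) (hg.mono (Ioc_subset_Ioc_right ht0T))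
  have hreflect : MapsTo (fun τ => t0 - τ) (Ioo 0 t0) (Icc 0 T) :=
    fun τ ⟨h0, h1⟩ => ⟨by linarith, by linarith⟩
  have hfm : AEMeasurable (fun τ => f (t0 - τ)) (volume.restrict (Ioo 0 t0)) :=
    (hf.comp (by fun_prop) hreflect).aemeasurable measurableSet_Ioo
  refine integrableOn_negPart_div_rpow ht0 hα1 hK (aemeasurable_const.sub hfm) fun τ hτ => ?_
  have hfg := hmax (t0 - τ) ⟨by linarith [hτ.2], by linarith [hτ.1]⟩
  have hgτ := (le_abs_self _).trans (hgK (t0 - τ) ⟨by linarith [hτ.2], by linarith [hτ.1]⟩)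
  linarith

theorem stmt_3 (α T : ℝ) (hα : 0 < α) (hα1 : α < 1) (hT : 0 < T)
    (f g : ℝ → ℝ) (hf : UpperSemicontinuousOn f (Icc 0 T))
    (hgc : ContinuousOn g (Icc 0 T)) (hg : ContDiffOn ℝ 1 g (Ioc 0 T))
    (t0 : ℝ) (ht0 : t0 ∈ Ioc 0 T)
    (hmax : ∀ s ∈ Ioc (0:ℝ) T, f s - g s ≤ f t0 - g t0) :
    IntegrableOn (fun τ => max (-((f t0 - f (t0 - τ)) / τ ^ (α + 1))) 0) (Ioo 0 t0) volume :=
  stmt_3_general α T hα1 f g hf hgc hg t0 ht0 hmax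
end

section
/- Let $0<\alpha<1$ and $T>0$. There exists no function $\psi\in C^1((0,T]^2)\cap C([0,T]^2)$ with $\partial_t\psi(\cdot,s)\in L^1(0,T)$ for each $s$ and $\partial_s\psi(t,\cdot)\in L^1(0,T)$ for each $t$, such that (i) $(\partial_t^{\alpha}\psi(\cdot,s))(t)+(\partial_s^{\alpha}\psi(t,\cdot))(s)\ge 0$ for all $(t,s)\in(0,T)^2$, (ii) $\psi(t,t)=0$ for all $t\in[0,T]$, and (iii) $\psi(t,s)>0$ whenever $t\ne s$. -/
open MeasureTheory Set Filter Real intervalIntegral Topology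

/-!
Evaluate the hypothesis on the diagonal at some `t ∈ (0, T)`. For `g τ = ψ τ t + ψ t τ`, which is
positive on `[0, t)` and vanishes at `t`, the two Caputo integrals add up to
`∫₀ᵗ g' τ (t - τ)^(-α) dτ`. Integrating by parts on `[0, b]`, `b < t`, bounds this integral over
`[0, b]` by `g b (t - b)^(-α) - g 0 t^(-α)`, since the remaining term
`α ∫ g τ (t - τ)^(-α-1) dτ` is nonnegative. As `b → t` the boundary term is `O((t - b)^(1-α)) → 0`,
so the whole integral is at most `-g 0 t^(-α) < 0`.
-/

lemma hasDerivAt_sub_rpow_neg {t x : ℝ} (α : ℝ) (hx : x < t) :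
    HasDerivAt (fun y => (t - y) ^ (-α)) (α * (t - x) ^ (-α - 1)) x := by
  convert ((hasDerivAt_id' x).const_sub t).rpow_const (p := -α) (Or.inl (sub_pos.2 hx).ne')
    using 1
  ring

lemma continuousOn_deriv_comp {E : Type*} [NormedAddCommGroup E] [NormedSpace ℝ E]
    {F : E → ℝ} {γ : ℝ → E} {v : E} {U : Set E} {S : Set ℝ}
    (hF : ∀ p ∈ U, DifferentiableAt ℝ F p) (hF' : ContinuousOn (fderiv ℝ F) U)
    (hγ : ∀ x, HasDerivAt γ v x) (hS : MapsTo γ S U) :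
    ContinuousOn (deriv (F ∘ γ)) S := by
  have hγc : Continuous γ := continuous_iff_continuousAt.2 fun x => (hγ x).continuousAt
  refine ((hF'.comp hγc.continuousOn hS).clm_apply (continuousOn_const (c := v))).congr
    fun x hx => ?_
  exact ((hF _ (hS hx)).hasFDerivAt.comp_hasDerivAt x (hγ x)).deriv

lemma intervalIntegrable_div_rpow_sub {α t : ℝ} {d : ℝ → ℝ} (hα1 : α < 1) (ht : 0 < t)
    (hd : IntegrableOn d (Ioo 0 t)) (hdc : ContinuousOn d (Ioc 0 t)) :
    IntervalIntegrable (fun τ => d τ / (t - τ) ^ α) volume 0 t := by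
  have ht2 : 0 < t / 2 := half_pos ht
  have ht2t : t / 2 < t := half_lt_self ht
  refine IntervalIntegrable.trans (b := t / 2) ?_ ?_
  · -- away from `τ = t` the kernel is continuous, hence bounded
    have hd' : IntegrableOn d (Icc 0 (t / 2)) :=
      (integrableOn_Icc_iff_integrableOn_Ioo).2 (hd.mono_set (Ioo_subset_Ioo_right ht2t.le))
    have hker : ContinuousOn (fun τ => ((t - τ) ^ α)⁻¹) (Icc 0 (t / 2)) :=
      ((continuous_sub_left t).continuousOn.rpow_const
        fun τ hτ => Or.inl (by linarith [hτ.2])).inv₀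
        fun τ hτ => (rpow_pos_of_pos (by linarith [hτ.2]) α).ne'
    rw [intervalIntegrable_iff_integrableOn_Icc_of_le ht2.le]
    simpa only [div_eq_mul_inv] using hd'.mul_continuousOn hker isCompact_Icc
  · -- near `τ = t` the kernel is integrable and `d` is continuous, hence bounded
    have hker : IntervalIntegrable (fun τ => (t - τ) ^ (-α)) volume (t / 2) t := by
      have h := (intervalIntegrable_rpow' (r := -α) (a := 0) (b := t / 2)
        (by linarith)).comp_sub_left t
      rw [sub_zero, sub_half] at h
      exact h.symm
    have hdc' : ContinuousOn d (uIcc (t / 2) t) := by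
      rw [uIcc_of_le ht2t.le]
      exact hdc.mono (Icc_subset_Ioc_iff ht2t.le |>.2 ⟨ht2, le_rfl⟩)
    refine (hker.mul_continuousOn hdc').congr fun τ hτ => ?_
    rw [uIoc_of_le ht2t.le] at hτ
    simp only [rpow_neg (sub_nonneg.2 hτ.2), div_eq_inv_mul]

lemma integral_deriv_div_rpow_sub_le {α a b t : ℝ} {g g' : ℝ → ℝ} (hα : 0 ≤ α) (hab : a ≤ b)
    (hbt : b < t) (hgc : ContinuousOn g (Icc a b)) (hg : ∀ τ ∈ Ioo a b, HasDerivAt g (g' τ) τ)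
    (hint : IntervalIntegrable (fun τ => g' τ / (t - τ) ^ α) volume a b)
    (hg_nonneg : ∀ τ ∈ Icc a b, 0 ≤ g τ) :
    ∫ τ in a..b, g' τ / (t - τ) ^ α ≤ g b * (t - b) ^ (-α) - g a * (t - a) ^ (-α) := by
  have hpos : ∀ τ ∈ Icc a b, t - τ ≠ 0 := fun τ hτ => by linarith [hτ.2]
  have hint' : IntervalIntegrable (fun τ => g τ * (α * (t - τ) ^ (-α - 1))) volume a b := by
    refine ContinuousOn.intervalIntegrable ?_
    rw [uIcc_of_le hab]
    exact hgc.mul (continuousOn_const.mul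
      ((continuous_sub_left t).continuousOn.rpow_const fun τ hτ => Or.inl (hpos τ hτ)))
  have hftc : ∫ τ in a..b, (g' τ / (t - τ) ^ α + g τ * (α * (t - τ) ^ (-α - 1))) =
      g b * (t - b) ^ (-α) - g a * (t - a) ^ (-α) := by
    refine integral_eq_sub_of_hasDeriv_right_of_le hab
      (hgc.mul ((continuous_sub_left t).continuousOn.rpow_const
        fun τ hτ => Or.inl (hpos τ hτ))) (fun τ hτ => ?_) (hint.add hint')
    have hτt : 0 ≤ t - τ := by linarith [hτ.2]
    convert ((hg τ hτ).mul (hasDerivAt_sub_rpow_neg α (hτ.2.trans hbt))).hasDerivWithinAt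
      using 1
    rw [rpow_neg hτt, div_eq_mul_inv]
  have hrem : 0 ≤ ∫ τ in a..b, g τ * (α * (t - τ) ^ (-α - 1)) :=
    integral_nonneg hab fun τ hτ => mul_nonneg (hg_nonneg τ hτ)
      (mul_nonneg hα (rpow_nonneg (by linarith [hτ.2]) _))
  rw [integral_add hint hint'] at hftc
  linarith

lemma tendsto_mul_sub_rpow_neg_nhdsLT {α t g' : ℝ} {g : ℝ → ℝ} (hα1 : α < 1)
    (hg : HasDerivWithinAt g g' (Iio t) t) (hgt : g t = 0) :
    Tendsto (fun b => g b * (t - b) ^ (-α)) (𝓝[<] t) (𝓝 0) := by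
  have hslope : Tendsto (slope g t) (𝓝[<] t) (𝓝 g') := by
    simpa using hasDerivWithinAt_iff_tendsto_slope.1 hg
  have hpow : Tendsto (fun b => (t - b) ^ (1 - α)) (𝓝[<] t) (𝓝 0) := by
    have h : Tendsto (fun b => t - b) (𝓝[<] t) (𝓝 0) := by
      simpa using ((continuous_sub_left t).tendsto t).mono_left nhdsWithin_le_nhds
    simpa [Function.comp_def, zero_rpow (by linarith : 1 - α ≠ 0)] using
      (continuousAt_rpow_const 0 (1 - α) (Or.inr (by linarith))).tendsto.comp h
  -- `g b (t - b)^(-α) = -(slope g t b) (t - b)^(1 - α)`, and the last factor tends to `0`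
  have h := (hslope.neg.mul hpow)
  rw [mul_zero] at h
  refine h.congr' (eventually_nhdsWithin_of_forall fun b (hb : b < t) => ?_)
  have htb : 0 < t - b := sub_pos.2 hb
  dsimp only
  rw [slope_def_field, hgt, sub_zero, ← neg_sub t b, div_neg, neg_neg,
    rpow_one_sub' htb.le (by linarith), rpow_neg htb.le]
  field_simp

lemma integral_deriv_div_rpow_sub_neg {α t : ℝ} {g g' : ℝ → ℝ} (hα : 0 ≤ α) (hα1 : α < 1)
    (ht : 0 < t) (hgc : ContinuousOn g (Icc 0 t)) (hg : ∀ τ ∈ Ioc 0 t, HasDerivAt g (g' τ) τ)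
    (hint : IntervalIntegrable (fun τ => g' τ / (t - τ) ^ α) volume 0 t)
    (hgt : g t = 0) (hg_pos : ∀ τ ∈ Ico 0 t, 0 < g τ) :
    ∫ τ in 0..t, g' τ / (t - τ) ^ α < 0 := by
  have hprim : Tendsto (fun b => ∫ τ in 0..b, g' τ / (t - τ) ^ α) (𝓝[<] t)
      (𝓝 (∫ τ in 0..t, g' τ / (t - τ) ^ α)) := by
    have h := (continuousOn_primitive_interval' hint left_mem_uIcc) t right_mem_uIcc
    rw [uIcc_of_le ht.le] at h
    exact nhdsWithin_Ioo_eq_nhdsLT ht ▸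
      h.tendsto.mono_left (nhdsWithin_mono _ Ioo_subset_Icc_self)
  have hbdry := (tendsto_mul_sub_rpow_neg_nhdsLT hα1 (hg t ⟨ht, le_rfl⟩).hasDerivWithinAt
    hgt).sub_const (g 0 * t ^ (-α))
  have hle := le_of_tendsto_of_tendsto hprim hbdry <| by
    filter_upwards [Ioo_mem_nhdsLT ht] with b hb
    have hsub : Icc 0 b ⊆ Icc 0 t := Icc_subset_Icc_right hb.2.le
    simpa using integral_deriv_div_rpow_sub_le hα hb.1.le hb.2 (hgc.mono hsub)
      (fun τ hτ => hg τ ⟨hτ.1, hτ.2.le.trans hb.2.le⟩)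
      (hint.mono_set (by simpa [uIcc_of_le ht.le, uIcc_of_le hb.1.le] using hsub))
      (fun τ hτ => (hg_pos τ ⟨hτ.1, hτ.2.trans_lt hb.2⟩).le)
  have : 0 < g 0 * t ^ (-α) := mul_pos (hg_pos 0 ⟨le_rfl, ht⟩) (rpow_pos_of_pos ht _)
  linarith

theorem stmt_9 (α T : ℝ) (hα : 0 < α) (hα1 : α < 1) (hT : 0 < T) :
    ¬ ∃ ψ : ℝ → ℝ → ℝ,
      ContinuousOn (fun p : ℝ × ℝ => ψ p.1 p.2) (Icc 0 T ×ˢ Icc 0 T) ∧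
      (∀ p ∈ Ioc (0:ℝ) T ×ˢ Ioc (0:ℝ) T,
        DifferentiableAt ℝ (fun q : ℝ × ℝ => ψ q.1 q.2) p) ∧
      ContinuousOn (fun p : ℝ × ℝ => fderiv ℝ (fun q : ℝ × ℝ => ψ q.1 q.2) p)
        (Ioc (0:ℝ) T ×ˢ Ioc (0:ℝ) T) ∧
      (∀ s ∈ Icc (0:ℝ) T,
        IntegrableOn (fun t' => deriv (fun t'' => ψ t'' s) t') (Ioo 0 T) volume) ∧
      (∀ t ∈ Icc (0:ℝ) T,
        IntegrableOn (fun s' => deriv (fun s'' => ψ t s'') s') (Ioo 0 T) volume) ∧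
      (∀ t ∈ Ioo (0:ℝ) T, ∀ s ∈ Ioo (0:ℝ) T,
        0 ≤ (1 / Gamma (1 - α)) *
              (∫ τ in (0:ℝ)..t, deriv (fun t' => ψ t' s) τ / (t - τ) ^ α) +
            (1 / Gamma (1 - α)) *
              (∫ τ in (0:ℝ)..s, deriv (fun s' => ψ t s') τ / (s - τ) ^ α)) ∧
      (∀ t ∈ Icc (0:ℝ) T, ψ t t = 0) ∧
      (∀ t ∈ Icc (0:ℝ) T, ∀ s ∈ Icc (0:ℝ) T, t ≠ s → 0 < ψ t s) := by
  rintro ⟨ψ, hcont, hdiff, hfderiv, hint₁, hint₂, hcaputo, hdiag, hpos⟩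
  set t := T / 2
  have ht : t ∈ Ioo 0 T := ⟨half_pos hT, half_lt_self hT⟩
  have htIcc : t ∈ Icc 0 T := Ioo_subset_Icc_self ht
  have htIoc : t ∈ Ioc 0 T := Ioo_subset_Ioc_self ht
  have hIcc : Icc 0 t ⊆ Icc 0 T := Icc_subset_Icc_right ht.2.le
  have hIoc : Ioc 0 t ⊆ Ioc 0 T := Ioc_subset_Ioc_right ht.2.le
  have hγ₁ (x : ℝ) : HasDerivAt (fun τ => (τ, t)) ((1 : ℝ), (0 : ℝ)) x :=
    (hasDerivAt_id x).prodMk (hasDerivAt_const x t)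
  have hγ₂ (x : ℝ) : HasDerivAt (fun τ => (t, τ)) ((0 : ℝ), (1 : ℝ)) x :=
    (hasDerivAt_const x t).prodMk (hasDerivAt_id x)
  have hd₁ : ∀ τ ∈ Ioc 0 t, HasDerivAt (fun x => ψ x t) (deriv (fun x => ψ x t) τ) τ :=
    fun τ hτ => ((hdiff _ ⟨hIoc hτ, htIoc⟩).comp τ (hγ₁ τ).differentiableAt).hasDerivAt
  have hd₂ : ∀ τ ∈ Ioc 0 t, HasDerivAt (fun x => ψ t x) (deriv (fun x => ψ t x) τ) τ :=
    fun τ hτ => ((hdiff _ ⟨htIoc, hIoc hτ⟩).comp τ (hγ₂ τ).differentiableAt).hasDerivAt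
  have hA := intervalIntegrable_div_rpow_sub hα1 ht.1
    ((hint₁ t htIcc).mono_set (Ioo_subset_Ioo_right ht.2.le))
    (continuousOn_deriv_comp hdiff hfderiv hγ₁ fun τ hτ => ⟨hIoc hτ, htIoc⟩)
  have hB := intervalIntegrable_div_rpow_sub hα1 ht.1
    ((hint₂ t htIcc).mono_set (Ioo_subset_Ioo_right ht.2.le))
    (continuousOn_deriv_comp (F := fun q : ℝ × ℝ => ψ q.1 q.2) hdiff hfderiv hγ₂
      fun τ hτ => ⟨htIoc, hIoc hτ⟩)
  have hgc : ContinuousOn (fun τ => ψ τ t + ψ t τ) (Icc 0 t) :=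
    (hcont.comp (continuous_id.prodMk continuous_const).continuousOn
      fun τ hτ => ⟨hIcc hτ, htIcc⟩).add
    (hcont.comp (continuous_const.prodMk continuous_id).continuousOn
      fun τ hτ => ⟨htIcc, hIcc hτ⟩)
  have hneg := integral_deriv_div_rpow_sub_neg hα.le hα1 ht.1 hgc
    (fun τ hτ => (hd₁ τ hτ).add (hd₂ τ hτ)) (by simpa only [add_div] using hA.add hB)
    (by simp [hdiag t htIcc]) fun τ hτ =>
      have hτ' := hIcc (Ico_subset_Icc_self hτ)
      add_pos (hpos τ hτ' t htIcc hτ.2.ne) (hpos t htIcc τ hτ' hτ.2.ne')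
  simp only [add_div] at hneg
  rw [integral_add hA hB] at hneg
  have hsum := hcaputo t ht t ht
  rw [← mul_add] at hsum
  have := (mul_nonneg_iff_of_pos_left (one_div_pos.2 (Gamma_pos_of_pos (by linarith)))).1 hsum
  linarith
end

section
/- Let $0<\alpha<1$, $T>0$. Suppose $u:[0,T]\to\mathbb{R}$ and $v:[0,T]\to\mathbb{R}$ are functions, $\hat t\in(0,T]$, and the map $\tau\mapsto u(\hat t)-u(\hat t-\tau)-(v(\hat t)-v(\hat t-\tau))$ is nonnegative on $[0,\hat t]$ (which holds when $(t)\mapsto u(t)-v(t)$ attains its maximum over $[0,\hat t]$ at $\hat t$). Assume additionally that $K_0[u](\hat t)$ and $K_0[v](\hat t)$ exist, where $K_0[f](t)=\frac{f(t)-f(0)}{t^{\alpha}\Gamma(1-\alpha)}+\frac{\alpha}{\Gamma(1-\alpha)}\int_0^{t}(f(t)-f(t-\tau))\frac{d\tau}{\tau^{\alpha+1}}$. Then $$K_0[u](\hat t)-K_0[v](\hat t)\ \ge\ \frac{(u(\hat t)-v(\hat t))-(u(0)-v(0))}{\hat t^{\alpha}\Gamma(1-\alpha)}.$$ -/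
open MeasureTheory Set Filter Real

noncomputable def marchaudIntegral (α : ℝ) (f : ℝ → ℝ) (t : ℝ) : ℝ :=
  ∫ τ in Ioo (0:ℝ) t, (f t - f (t - τ)) / τ ^ (α + 1)

/-- The operator `K₀[f](t)` of the paper. -/
noncomputable def marchaudDerivative (α : ℝ) (f : ℝ → ℝ) (t : ℝ) : ℝ :=
  (f t - f 0) / (t ^ α * Gamma (1 - α)) + α / Gamma (1 - α) * marchaudIntegral α f t

theorem marchaudIntegral_mono {α t : ℝ} {f g : ℝ → ℝ}
    (hf : IntegrableOn (fun τ => (f t - f (t - τ)) / τ ^ (α + 1)) (Ioo 0 t) volume)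
    (hg : IntegrableOn (fun τ => (g t - g (t - τ)) / τ ^ (α + 1)) (Ioo 0 t) volume)
    (hfg : ∀ τ ∈ Ioo 0 t, g t - g (t - τ) ≤ f t - f (t - τ)) :
    marchaudIntegral α g t ≤ marchaudIntegral α f t :=
  setIntegral_mono_on hg hf measurableSet_Ioo fun τ hτ =>
    div_le_div_of_nonneg_right (hfg τ hτ) (rpow_pos_of_pos hτ.1 _).le

theorem marchaudDerivative_sub_eq (α : ℝ) (f g : ℝ → ℝ) (t : ℝ) :
    marchaudDerivative α f t - marchaudDerivative α g t =
      ((f t - g t) - (f 0 - g 0)) / (t ^ α * Gamma (1 - α)) +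
        α / Gamma (1 - α) * (marchaudIntegral α f t - marchaudIntegral α g t) := by
  unfold marchaudDerivative
  ring

theorem stmt_16_general (α : ℝ) (hα : 0 < α) (hα1 : α < 1)
    (u v : ℝ → ℝ) (t0 : ℝ)
    (hpos : ∀ τ ∈ Icc (0:ℝ) t0, 0 ≤ (u t0 - u (t0 - τ)) - (v t0 - v (t0 - τ)))
    (hu : IntegrableOn (fun τ => (u t0 - u (t0 - τ)) / τ ^ (α + 1)) (Ioo 0 t0) volume)
    (hv : IntegrableOn (fun τ => (v t0 - v (t0 - τ)) / τ ^ (α + 1)) (Ioo 0 t0) volume) :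
    ((u t0 - v t0) - (u 0 - v 0)) / (t0 ^ α * Gamma (1 - α)) ≤
      ((u t0 - u 0) / (t0 ^ α * Gamma (1 - α)) +
          (α / Gamma (1 - α)) * ∫ τ in Ioo (0:ℝ) t0, (u t0 - u (t0 - τ)) / τ ^ (α + 1)) -
        ((v t0 - v 0) / (t0 ^ α * Gamma (1 - α)) +
          (α / Gamma (1 - α)) * ∫ τ in Ioo (0:ℝ) t0, (v t0 - v (t0 - τ)) / τ ^ (α + 1)) := by
  change _ ≤ marchaudDerivative α u t0 - marchaudDerivative α v t0
  have hint : marchaudIntegral α v t0 ≤ marchaudIntegral α u t0 :=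
    marchaudIntegral_mono hu hv fun τ hτ => sub_nonneg.mp (hpos τ (Ioo_subset_Icc_self hτ))
  have hcoef : 0 ≤ α / Gamma (1 - α) := div_nonneg hα.le (Gamma_pos_of_pos (sub_pos.mpr hα1)).le
  rw [marchaudDerivative_sub_eq]
  exact le_add_of_nonneg_right (mul_nonneg hcoef (sub_nonneg.mpr hint))

theorem stmt_16 (α T : ℝ) (hα : 0 < α) (hα1 : α < 1) (hT : 0 < T)
    (u v : ℝ → ℝ) (t0 : ℝ) (ht0 : t0 ∈ Ioc 0 T)
    (hpos : ∀ τ ∈ Icc (0:ℝ) t0, 0 ≤ (u t0 - u (t0 - τ)) - (v t0 - v (t0 - τ)))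
    (hu : IntegrableOn (fun τ => (u t0 - u (t0 - τ)) / τ ^ (α + 1)) (Ioo 0 t0) volume)
    (hv : IntegrableOn (fun τ => (v t0 - v (t0 - τ)) / τ ^ (α + 1)) (Ioo 0 t0) volume) :
    ((u t0 - v t0) - (u 0 - v 0)) / (t0 ^ α * Gamma (1 - α)) ≤
      ((u t0 - u 0) / (t0 ^ α * Gamma (1 - α)) +
          (α / Gamma (1 - α)) * ∫ τ in Ioo (0:ℝ) t0, (u t0 - u (t0 - τ)) / τ ^ (α + 1)) -
        ((v t0 - v 0) / (t0 ^ α * Gamma (1 - α)) +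
          (α / Gamma (1 - α)) * ∫ τ in Ioo (0:ℝ) t0, (v t0 - v (t0 - τ)) / τ ^ (α + 1)) :=
  stmt_16_general α hα hα1 u v t0 hpos hu hv
end
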